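/- Let G = (X, E) be a finite simple graph that is 2-connected and has more than three vertices. Then there exists an edge e of G such that the contracted graph G/e is 2-connected. -/

import Mathlib

/-- A finite simple graph `G` is 2-connected if it has more than two vertices,
is connected, and removing any single vertex (with all incident edges) leaves
a connected graph. -/
def TwoConnected {V : Type*} [Fintype V] (G : SimpleGraph V) : Prop :=
  2 < Fintype.card V ∧ G.Connected ∧
    ∀ v : V, (SimpleGraph.induce ({v}ᶜ : Set V) G).Connected

/-- Contraction of the edge `{x, y}` of a simple graph `G`: the vertex `y` is
identified with the vertex `x` (so the vertex set is `{v // v ≠ y}`); parallel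
edges are merged and loops are deleted. -/
def SimpleGraph.contractEdge {X : Type*} (G : SimpleGraph X) (x y : X) :
    SimpleGraph {v : X // v ≠ y} where
  Adj a b := a ≠ b ∧
    (G.Adj a.1 b.1 ∨ (a.1 = x ∧ G.Adj y b.1) ∨ (b.1 = x ∧ G.Adj y a.1))
  symm := by
    constructor
    rintro a b ⟨hab, h⟩
    refine ⟨hab.symm, ?_⟩
    rcases h with h | ⟨h1, h2⟩ | ⟨h1, h2⟩
    · exact Or.inl h.symm
    · exact Or.inr (Or.inr ⟨h1, h2⟩)
    · exact Or.inr (Or.inl ⟨h1, h2⟩)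
  loopless := by constructor; rintro a ⟨h, -⟩; exact h rfl



/-!
Call `xy` good if `G - x - y` is connected. If no edge were good, choose an edge `xy` and a
vertex `a ∉ {x, y}` whose component `C` in `G - x - y` is inclusion-minimal. As `G - x` is
connected, `y` has a neighbour `z ∈ C`. Every vertex outside `C ∪ {y}` reaches `x` in `G - y - z`
(through `G - y`, along a path that stays outside `C`), so since `G - y - z` is disconnected
some `a'` is cut off from `x` there, and its component lies in `C \ {z}`: a contradiction.

Contracting a good edge `xy` preserves 2-connectivity: removing the merged vertex leaves
`G - x - y`, and removing any other vertex `v` leaves an image of `G - v` under the map merging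
`y` into `x`, which preserves connectivity.
-/

namespace SimpleGraph

variable {V W : Type*} {G : SimpleGraph V} {H : SimpleGraph W}

theorem Connected.of_surjective_adj_or_eq (f : V → W) (hf : Function.Surjective f)
    (hadj : ∀ ⦃a b⦄, G.Adj a b → f a = f b ∨ H.Adj (f a) (f b)) (hG : G.Connected) :
    H.Connected := by
  have hwalk : ∀ {a b : V}, G.Walk a b → H.Reachable (f a) (f b) := by
    intro a b p
    induction p with
    | nil => rfl
    | cons h _ ih =>
      rcases hadj h with heq | hH
      · exact heq ▸ ih
      · exact hH.reachable.trans ih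
  have : Nonempty W := hG.nonempty.map f
  refine ⟨fun u w => ?_⟩
  obtain ⟨a, rfl⟩ := hf u
  obtain ⟨b, rfl⟩ := hf w
  exact (hG.preconnected a b).elim hwalk

theorem Connected.induce_image {f : V → W}
    (hadj : ∀ ⦃a b⦄, G.Adj a b → f a = f b ∨ H.Adj (f a) (f b)) {s : Set V}
    (hs : (G.induce s).Connected) : (H.induce (f '' s)).Connected :=
  hs.of_surjective_adj_or_eq _ Set.imageFactorization_surjective
    fun _ _ h => (hadj h).imp Subtype.ext id

def ReachableIn (G : SimpleGraph V) (s : Set V) (a b : V) : Prop :=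
  ∃ p : G.Walk a b, ∀ v ∈ p.support, v ∈ s

namespace ReachableIn

variable {s t : Set V} {a b c : V}

theorem mem_right (h : G.ReachableIn s a b) : b ∈ s :=
  h.elim fun p hp => hp b p.end_mem_support

theorem refl (ha : a ∈ s) : G.ReachableIn s a a :=
  ⟨.nil, by simpa using ha⟩

theorem symm (h : G.ReachableIn s a b) : G.ReachableIn s b a :=
  h.elim fun p hp => ⟨p.reverse, fun v hv => hp v (by simpa using hv)⟩

theorem trans (hab : G.ReachableIn s a b) (hbc : G.ReachableIn s b c) : G.ReachableIn s a c := by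
  obtain ⟨p, hp⟩ := hab
  obtain ⟨q, hq⟩ := hbc
  refine ⟨p.append q, fun v hv => ?_⟩
  rcases (Walk.mem_support_append_iff _ _).1 hv with hv | hv
  exacts [hp v hv, hq v hv]

theorem adj_right (h : G.ReachableIn s a b) (hbc : G.Adj b c) (hc : c ∈ s) :
    G.ReachableIn s a c :=
  h.trans ⟨hbc.toWalk, by simp [h.mem_right, hc]⟩

theorem mono (h : G.ReachableIn s a b) (hst : s ⊆ t) : G.ReachableIn t a b :=
  h.elim fun p hp => ⟨p, fun v hv => hst (hp v hv)⟩

theorem diff_singleton [DecidableEq V] (h : G.ReachableIn s a b) (hc : ¬G.ReachableIn s a c) :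
    G.ReachableIn (s \ {c}) a b := by
  obtain ⟨p, hp⟩ := h
  refine ⟨p, fun v hv => ⟨hp v hv, ?_⟩⟩
  rintro rfl
  exact hc ⟨p.takeUntil v hv, fun u hu => hp u (p.support_takeUntil_subset_support hv hu)⟩

theorem exists_adj_diff_singleton (h : G.ReachableIn s a b) (hab : a ≠ b) :
    ∃ c, G.ReachableIn (s \ {b}) a c ∧ G.Adj c b := by
  obtain ⟨p, hp⟩ := h
  obtain ⟨d, hd, hfst, hsnd⟩ := p.exists_boundary_dart {v | G.ReachableIn (s \ {b}) a v}
    (refl ⟨hp a p.start_mem_support, hab⟩) fun h => h.mem_right.2 rfl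
  refine ⟨d.fst, hfst, ?_⟩
  obtain rfl : d.snd = b := by
    by_contra hne
    exact hsnd (hfst.adj_right d.adj ⟨hp _ (p.dart_snd_mem_support_of_mem_darts hd), hne⟩)
  exact d.adj

end ReachableIn

theorem reachable_induce_iff_reachableIn {s : Set V} {a b : s} :
    (G.induce s).Reachable a b ↔ G.ReachableIn s a b := by
  constructor
  · rintro ⟨p⟩
    refine ⟨p.map (Embedding.induce s).toHom, fun v hv => ?_⟩
    replace hv : v ∈ (p.map (Embedding.induce s).toHom).support := hv
    rw [Walk.support_map] at hv
    obtain ⟨u, -, rfl⟩ := List.mem_map.1 hv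
    exact u.2
  · rintro ⟨p, hp⟩
    exact ⟨p.induce s hp⟩

theorem preconnected_induce_iff_reachableIn {s : Set V} :
    (G.induce s).Preconnected ↔ ∀ a ∈ s, ∀ b ∈ s, G.ReachableIn s a b :=
  ⟨fun h a ha b hb => reachable_induce_iff_reachableIn.1 (h ⟨a, ha⟩ ⟨b, hb⟩),
    fun h a b => reachable_induce_iff_reachableIn.2 (h a a.2 b b.2)⟩

section Descent

variable [DecidableEq V] {x y z a v : V}

theorem reachableIn_compl_pair_of_not_reachableIn (hG : (G.induce {y}ᶜ).Connected)
    (hx : x ∈ ({y, z}ᶜ : Set V)) (haz : G.ReachableIn {x, y}ᶜ a z) (hv : v ∈ ({y, z}ᶜ : Set V))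
    (hav : ¬G.ReachableIn {x, y}ᶜ a v) : G.ReachableIn {y, z}ᶜ v x := by
  by_cases hvx : v = x
  · rw [hvx]
    exact .refl hx
  have hvx' : G.ReachableIn {y}ᶜ v x :=
    reachable_induce_iff_reachableIn.1 (hG.preconnected ⟨v, fun h => hv (.inl h)⟩
      ⟨x, fun h => hx (.inl h)⟩)
  obtain ⟨w, hvw, hwx⟩ := hvx'.exists_adj_diff_singleton hvx
  have hvz : ¬G.ReachableIn {x, y}ᶜ v z := fun h => hav (haz.trans h.symm)
  have hvw' : G.ReachableIn ({x, y}ᶜ \ {z}) v w :=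
    (hvw.mono fun u ⟨huy, hux⟩ => by simp_all).diff_singleton hvz
  exact (hvw'.mono fun u ⟨hu, huz⟩ => by simp_all).adj_right hwx hx

theorem exists_adj_reachableIn_ssubset (hG : ∀ v, (G.induce {v}ᶜ).Connected) (hxy : G.Adj x y)
    (ha : a ∈ ({x, y}ᶜ : Set V)) (hsep : ∀ z, G.Adj y z → ¬(G.induce {y, z}ᶜ).Preconnected) :
    ∃ z a', G.Adj y z ∧ a' ∈ ({y, z}ᶜ : Set V) ∧
      {v | G.ReachableIn {y, z}ᶜ a' v} ⊂ {v | G.ReachableIn {x, y}ᶜ a v} := by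
  obtain ⟨z, haz, hzy⟩ : ∃ z, G.ReachableIn {x, y}ᶜ a z ∧ G.Adj z y := by
    have hay : G.ReachableIn {x}ᶜ a y :=
      reachable_induce_iff_reachableIn.1 ((hG x).preconnected ⟨a, fun h => ha (.inl h)⟩
        ⟨y, hxy.ne'⟩)
    obtain ⟨z, haz, hzy⟩ := hay.exists_adj_diff_singleton fun h => ha (.inr h)
    exact ⟨z, haz.mono fun u ⟨hux, huy⟩ => by simp_all, hzy⟩
  have hx : x ∈ ({y, z}ᶜ : Set V) := by
    rintro (h | h)
    exacts [hxy.ne h, haz.mem_right (.inl h.symm)]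
  obtain ⟨a', ha', hxa'⟩ : ∃ a' ∈ ({y, z}ᶜ : Set V), ¬G.ReachableIn {y, z}ᶜ x a' := by
    by_contra! hall
    exact hsep z hzy.symm (preconnected_induce_iff_reachableIn.2
      fun b hb c hc => (hall b hb).symm.trans (hall c hc))
  refine ⟨z, a', hzy.symm, ha', (Set.ssubset_iff_of_subset fun v hv => ?_).2
    ⟨z, haz, fun h => h.mem_right (.inr rfl)⟩⟩
  by_contra hav
  exact hxa' ((reachableIn_compl_pair_of_not_reachableIn (hG y) hx haz hv.mem_right hav).symm.trans
    hv.symm)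

theorem exists_adj_preconnected_induce_compl_pair [Finite V]
    (hG : ∀ v, (G.induce {v}ᶜ).Connected) (hxy : G.Adj x y) :
    ∃ x y, G.Adj x y ∧ (G.induce {x, y}ᶜ).Preconnected := by
  by_contra! hsep
  -- Descent on the component of `a` in `G - x - y`; strict inclusion is well founded on `Set V`.
  suffices ∀ C : Set V, ∀ x y a, G.Adj x y → a ∈ ({x, y}ᶜ : Set V) →
      {v | G.ReachableIn {x, y}ᶜ a v} ≠ C by
    obtain ⟨a, ha⟩ : ({x, y}ᶜ : Set V).Nonempty := by
      by_contra hempty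
      exact hsep x y hxy fun u _ => (hempty ⟨u, u.2⟩).elim
    exact this _ x y a hxy ha rfl
  intro C
  induction C using WellFoundedLT.induction with
  | ind C ih =>
    rintro x y a hxy ha rfl
    obtain ⟨z, a', hyz, ha', hlt⟩ := exists_adj_reachableIn_ssubset hG hxy ha (hsep y)
    exact ih _ hlt y z a' hyz ha' rfl

end Descent

section Contraction

variable [DecidableEq V] {x y : V}

def contractEdgeMap (hxy : x ≠ y) (v : V) : {v : V // v ≠ y} :=
  if h : v = y then ⟨x, hxy⟩ else ⟨v, h⟩

theorem contractEdgeMap_surjective (hxy : x ≠ y) : Function.Surjective (contractEdgeMap hxy) :=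
  fun w => ⟨w.1, dif_neg w.2⟩

theorem contractEdgeMap_eq_or_adj (hxy : x ≠ y) ⦃a b : V⦄ (hab : G.Adj a b) :
    contractEdgeMap hxy a = contractEdgeMap hxy b ∨
      (G.contractEdge x y).Adj (contractEdgeMap hxy a) (contractEdgeMap hxy b) := by
  refine or_iff_not_imp_left.2 fun hne => ⟨hne, ?_⟩
  unfold contractEdgeMap at hne ⊢
  split_ifs at hne ⊢ with hay hby hby
  · exact absurd rfl hne
  · exact .inr (.inl ⟨rfl, hay ▸ hab⟩)
  · exact .inr (.inr ⟨rfl, hby ▸ hab.symm⟩)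
  · exact .inl hab

theorem preimage_contractEdgeMap_self (hxy : x ≠ y) :
    contractEdgeMap hxy ⁻¹' {⟨x, hxy⟩} = {x, y} := by
  ext v
  by_cases hvy : v = y <;> simp [contractEdgeMap, hvy, Subtype.ext_iff]

theorem preimage_contractEdgeMap_of_ne (hxy : x ≠ y) {w : {v : V // v ≠ y}} (hwx : w.1 ≠ x) :
    contractEdgeMap hxy ⁻¹' {w} = {w.1} := by
  ext v
  by_cases hvy : v = y
  · simp [contractEdgeMap, hvy, Subtype.ext_iff, Ne.symm hwx, Ne.symm w.2]
  · simp [contractEdgeMap, hvy, Subtype.ext_iff]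

end Contraction

end SimpleGraph

open SimpleGraph in
theorem TwoConnected.contractEdge {V : Type*} [Fintype V] [DecidableEq V] {G : SimpleGraph V}
    {x y : V} (h2 : TwoConnected G) (hV : 3 < Fintype.card V) (hxy : x ≠ y)
    (hP : (G.induce {x, y}ᶜ).Preconnected) : TwoConnected (G.contractEdge x y) := by
  have hf := contractEdgeMap_surjective hxy
  have hadj := contractEdgeMap_eq_or_adj (G := G) hxy
  refine ⟨?_, h2.2.1.of_surjective_adj_or_eq _ hf hadj, fun w => ?_⟩
  · rw [Fintype.card_subtype_compl, Fintype.card_subtype_eq]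
    omega
  have hw : (G.induce (contractEdgeMap hxy ⁻¹' {w}ᶜ)).Connected := by
    rw [Set.preimage_compl]
    by_cases hwx : w.1 = x
    · obtain rfl : w = ⟨x, hxy⟩ := Subtype.ext hwx
      obtain ⟨v, -, hv⟩ := Finset.exists_mem_notMem_of_card_lt_card (s := {x, y})
        (t := Finset.univ) (Finset.card_le_two.trans_lt (by rw [Finset.card_univ]; omega))
      rw [preimage_contractEdgeMap_self]
      exact (connected_iff _).2 ⟨hP, ⟨v, by simpa using hv⟩⟩
    · rw [preimage_contractEdgeMap_of_ne hxy hwx]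
      exact h2.2.2 w.1
  have := hw.induce_image hadj
  rwa [Set.image_preimage_eq _ hf] at this

/-- If a finite simple graph is 2-connected and has more than three vertices,
then there exists an edge whose contraction is 2-connected. -/
theorem exists_edge_contract_twoConnected {X : Type*} [Fintype X] [DecidableEq X]
    (G : SimpleGraph X) (h2 : TwoConnected G) (hV : 3 < Fintype.card X) :
    ∃ x y : X, G.Adj x y ∧ TwoConnected (G.contractEdge x y) := by
  have : Nontrivial X := Fintype.one_lt_card_iff_nontrivial.1 (by omega)
  obtain ⟨v⟩ := h2.2.1.nonempty
  obtain ⟨u, huv⟩ := h2.2.1.preconnected.exists_adj_of_nontrivial v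
  obtain ⟨x, y, hxy, hP⟩ := SimpleGraph.exists_adj_preconnected_induce_compl_pair h2.2.2 huv
  exact ⟨x, y, hxy, h2.contractEdge hV hxy.ne hP⟩
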